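/- (Greedy is not optimal) Consider the two-item instance with base utilities v 1 = 1, v 2 = 10 and boredom coefficients α 1 = 0, α 2 = 10, and any decay rate r ∈ (0, 2/9). Then: (a) every greedy selection sequence x satisfies limsup_{T→∞} (1/T)·∑_{t=0}^{T−1} u (x t) t ≤ 1 + 9r; (b) the alternating selection sequence y (with y t = item 2 when t is even and y t = item 1 when t is odd) satisfies liminf_{T→∞} (1/T)·∑_{t=0}^{T−1} u (y t) t ≥ (1/2)·(1 + 10 − 10·(1−r)/(2−r)) ≥ 3. In particular the greedy strategy does not maximize long-run average utility. -/

import Mathlib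

/-!
Item `0` has constant utility `1`, and the utility of item `1` is `10 (1 - m)` where `m` is its
memory. Greedy skips item `1` only when `10 (1 - m) ≤ 1`, after which one step of decay raises
its utility to at most `(1 - r) + 10 r = 1 + 9 r`; while it is chosen its utility only decays.
So from the start the greedy utility is at most `1 + 9 r + 10 (1 - r) ^ t`, whose Cesàro mean
tends to `1 + 9 r`. Alternating instead keeps the memory of item `1` at even times below the
fixed point `(1 - r) / (2 - r)` of `m ↦ (1 - r) ^ 2 m + r (1 - r)`, so each pair of steps earns
at least `1 + 10 - 10 (1 - r) / (2 - r)`.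
-/

/-- The memory of item `i` at time `t`, given decay rate `r` and selection sequence `x`. -/
def memory {n : ℕ} (r : ℝ) (x : ℕ → Fin n) (i : Fin n) : ℕ → ℝ
  | 0 => 0
  | t + 1 => (1 - r) * memory r x i t + r * (if x t = i then 1 else 0)

open Filter Finset Topology

section Averages

variable {f : ℕ → ℝ}

lemma limsup_avg_le_of_sum_le {b c D : ℝ} (hb : ∀ t, b ≤ f t)
    (hsum : ∀ T : ℕ, ∑ t ∈ range T, f t ≤ T * c + D) :
    limsup (fun T : ℕ => (∑ t ∈ range T, f t) / T) atTop ≤ c := by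
  have hlim : Tendsto (fun T : ℕ => c + D / T) atTop (𝓝 c) := by
    simpa using (tendsto_const_div_atTop_nhds_zero_nat D).const_add c
  have hcobdd :
      IsCoboundedUnder (· ≤ ·) atTop (fun T : ℕ => (∑ t ∈ range T, f t) / T) := by
    refine isCoboundedUnder_le_of_eventually_le atTop (x := b) ?_
    filter_upwards [eventually_gt_atTop 0] with T hT
    rw [le_div_iff₀ (by exact_mod_cast hT)]
    simpa [mul_comm] using card_nsmul_le_sum (range T) f b fun t _ => hb t
  calc limsup (fun T : ℕ => (∑ t ∈ range T, f t) / T) atTop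
      ≤ limsup (fun T : ℕ => c + D / T) atTop := by
        refine limsup_le_limsup ?_ hcobdd hlim.isBoundedUnder_le
        filter_upwards [eventually_gt_atTop 0] with T hT
        have hT : (0 : ℝ) < T := by exact_mod_cast hT
        rw [div_le_iff₀ hT, add_mul, div_mul_cancel₀ _ hT.ne']
        linarith [hsum T]
    _ = c := hlim.limsup_eq

lemma le_liminf_avg_of_le_sum {B c : ℝ} (hB : ∀ t, f t ≤ B)
    (hsum : ∀ T : ℕ, T * c ≤ ∑ t ∈ range T, f t) :
    c ≤ liminf (fun T : ℕ => (∑ t ∈ range T, f t) / T) atTop := by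
  refine le_liminf_of_le ?_ ?_
  · refine isCoboundedUnder_ge_of_eventually_le atTop (x := B) ?_
    filter_upwards [eventually_gt_atTop 0] with T hT
    rw [div_le_iff₀ (by exact_mod_cast hT)]
    simpa [mul_comm] using sum_le_card_nsmul (range T) f B fun t _ => hB t
  · filter_upwards [eventually_gt_atTop 0] with T hT
    rw [le_div_iff₀ (by exact_mod_cast hT)]
    linarith [hsum T]

lemma mul_le_sum_range_of_pairs {c : ℝ} (hpair : ∀ k, 2 * c ≤ f (2 * k) + f (2 * k + 1))
    (heven : ∀ k, c ≤ f (2 * k)) (T : ℕ) : T * c ≤ ∑ t ∈ range T, f t := by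
  have hdouble : ∀ k : ℕ, (2 * k : ℕ) * c ≤ ∑ t ∈ range (2 * k), f t := by
    intro k
    induction k with
    | zero => simp
    | succ k ih =>
      rw [show 2 * (k + 1) = 2 * k + 1 + 1 by ring, sum_range_succ, sum_range_succ]
      push_cast at ih ⊢
      linarith [hpair k]
  obtain ⟨k, rfl | rfl⟩ := Nat.even_or_odd' T
  · exact hdouble k
  · rw [sum_range_succ]
    push_cast at hdouble ⊢
    linarith [hdouble k, heven k]

end Averages

section Memory

variable {n : ℕ} {r : ℝ} {x : ℕ → Fin n} {i : Fin n}

lemma memory_succ_of_eq {t : ℕ} (h : x t = i) :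
    memory r x i (t + 1) = (1 - r) * memory r x i t + r := by
  simp [memory, h]

lemma memory_succ_of_ne {t : ℕ} (h : x t ≠ i) :
    memory r x i (t + 1) = (1 - r) * memory r x i t := by
  simp [memory, h]

lemma memory_nonneg (hr0 : 0 ≤ r) (hr1 : r ≤ 1) (t : ℕ) : 0 ≤ memory r x i t := by
  induction t with
  | zero => simp [memory]
  | succ t ih =>
    by_cases h : x t = i
    · rw [memory_succ_of_eq h]; nlinarith
    · rw [memory_succ_of_ne h]; nlinarith

lemma one_sub_memory_le {θ : ℝ} (hr0 : 0 ≤ r) (hr1 : r ≤ 1) (hθ : 0 ≤ θ)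
    (hskip : ∀ t, x t ≠ i → 1 - memory r x i t ≤ θ) (t : ℕ) :
    1 - memory r x i t ≤ (1 - r) * θ + r + (1 - r) ^ t := by
  induction t with
  | zero => simp [memory]; nlinarith
  | succ t ih =>
    have hpow : 0 ≤ (1 - r) ^ (t + 1) := pow_nonneg (by linarith) _
    have hA : 0 ≤ (1 - r) * θ + r := by nlinarith
    by_cases h : x t = i
    · rw [memory_succ_of_eq h, pow_succ]
      nlinarith [mul_le_mul_of_nonneg_left ih (by linarith : (0 : ℝ) ≤ 1 - r),
        mul_nonneg hr0 hA]
    · rw [memory_succ_of_ne h]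
      nlinarith [hskip t h]

lemma memory_even_le_of_alternating (hr1 : r ≤ 1)
    (heven : ∀ k, x (2 * k) = i) (hodd : ∀ k, x (2 * k + 1) ≠ i) (k : ℕ) :
    memory r x i (2 * k) ≤ (1 - r) / (2 - r) := by
  have h2r : 0 < 2 - r := by linarith
  induction k with
  | zero => simp only [memory]; exact div_nonneg (by linarith) h2r.le
  | succ k ih =>
    rw [show 2 * (k + 1) = 2 * k + 1 + 1 by ring, memory_succ_of_ne (hodd k),
      memory_succ_of_eq (heven k)]
    calc (1 - r) * ((1 - r) * memory r x i (2 * k) + r)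
        ≤ (1 - r) * ((1 - r) * ((1 - r) / (2 - r)) + r) := by gcongr
      _ = (1 - r) / (2 - r) := by field_simp; ring

end Memory

def utility {n : ℕ} (v α : Fin n → ℝ) (r : ℝ) (x : ℕ → Fin n) (i : Fin n) (t : ℕ) :
    ℝ :=
  v i - α i * memory r x i t

def IsGreedy {n : ℕ} (v α : Fin n → ℝ) (r : ℝ) (x : ℕ → Fin n) : Prop :=
  ∀ t i, utility v α r x i t ≤ utility v α r x (x t) t

section Example

variable {r : ℝ} {x : ℕ → Fin 2}

local notation "u" => utility ![1, 10] ![0, 10] r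

lemma utility_zero_eq_one (t : ℕ) : u x 0 t = 1 := by simp [utility]

lemma utility_one_eq (t : ℕ) : u x 1 t = 10 * (1 - memory r x 1 t) := by
  simp [utility]; ring

lemma IsGreedy.utility_le (hr0 : 0 ≤ r) (hr1 : r ≤ 1) (hx : IsGreedy ![1, 10] ![0, 10] r x)
    (t : ℕ) : u x (x t) t ≤ 1 + 9 * r + 10 * (1 - r) ^ t := by
  have hskip : ∀ s, x s ≠ 1 → 1 - memory r x 1 s ≤ 1 / 10 := by
    intro s hs
    have h := hx s 1
    rw [show x s = 0 by omega, utility_zero_eq_one, utility_one_eq] at h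
    linarith
  have hbound := one_sub_memory_le hr0 hr1 (by norm_num) hskip t
  rcases (by omega : x t = 0 ∨ x t = 1) with h | h <;> rw [h]
  · rw [utility_zero_eq_one]
    nlinarith [pow_nonneg (by linarith : (0 : ℝ) ≤ 1 - r) t]
  · rw [utility_one_eq]
    linarith

lemma IsGreedy.limsup_avg_utility_le (hr0 : 0 < r) (hr1 : r ≤ 1)
    (hx : IsGreedy ![1, 10] ![0, 10] r x) :
    limsup (fun T : ℕ => (∑ t ∈ range T, u x (x t) t) / T) atTop ≤ 1 + 9 * r := by
  refine limsup_avg_le_of_sum_le (b := 1) (D := 10 / r) (fun t => ?_) (fun T => ?_)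
  · simpa [utility_zero_eq_one] using hx t 0
  · have hgeom := geom_sum_Ico_le_of_lt_one (m := 0) (n := T) (x := 1 - r) (by linarith)
      (by linarith)
    rw [← range_eq_Ico, pow_zero, sub_sub_cancel] at hgeom
    calc ∑ t ∈ range T, u x (x t) t
        ≤ ∑ t ∈ range T, (1 + 9 * r + 10 * (1 - r) ^ t) :=
          sum_le_sum fun t _ => hx.utility_le hr0.le hr1 t
      _ = T * (1 + 9 * r) + 10 * ∑ t ∈ range T, (1 - r) ^ t := by
          rw [sum_add_distrib, ← mul_sum, sum_const, card_range, nsmul_eq_mul]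
      _ ≤ T * (1 + 9 * r) + 10 / r := by
          rw [div_eq_mul_one_div 10 r]; gcongr

lemma three_le_alternating_bound (hr0 : 0 ≤ r) (hr1 : r ≤ 1) :
    3 ≤ (1 / 2) * (1 + 10 - 10 * (1 - r) / (2 - r)) := by
  have h : 10 * (1 - r) / (2 - r) ≤ 5 := by
    rw [div_le_iff₀ (by linarith)]; linarith
  linarith

lemma le_liminf_avg_utility_alternating (hr0 : 0 ≤ r) (hr1 : r ≤ 1)
    (hy : ∀ t, x t = if Even t then 1 else 0) :
    (1 / 2) * (1 + 10 - 10 * (1 - r) / (2 - r)) ≤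
      liminf (fun T : ℕ => (∑ t ∈ range T, u x (x t) t) / T) atTop := by
  have heven : ∀ k, x (2 * k) = 1 := fun k => by simp [hy]
  have hodd : ∀ k, x (2 * k + 1) = 0 := fun k => by simp [hy, Nat.not_even_bit1]
  have hmem := memory_even_le_of_alternating hr1 heven (fun k => by simp [hodd k])
  have hbound := three_le_alternating_bound hr0 hr1
  have hu_even : ∀ k, 10 - 10 * (1 - r) / (2 - r) ≤ u x (x (2 * k)) (2 * k) := fun k => by
    rw [heven, utility_one_eq, mul_div_assoc]; linarith [hmem k]
  have hu_odd : ∀ k, u x (x (2 * k + 1)) (2 * k + 1) = 1 := fun k => by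
    rw [hodd, utility_zero_eq_one]
  refine le_liminf_avg_of_le_sum (B := 10) (fun t => ?_) (mul_le_sum_range_of_pairs ?_ ?_)
  · rcases (by omega : x t = 0 ∨ x t = 1) with h | h <;> rw [h]
    · norm_num [utility_zero_eq_one]
    · rw [utility_one_eq]; linarith [memory_nonneg hr0 hr1 (x := x) (i := 1) t]
  · intro k; rw [hu_odd]; linarith [hu_even k]
  · intro k; linarith [hu_even k]

end Example

/-- (Greedy is not optimal) For the two-item instance `v = (1, 10)`, `α = (0, 10)` and any
`r ∈ (0, 2/9)`: (a) every greedy selection has long-run average utility (limsup) at most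
`1 + 9r`; (b) the alternating selection `y` (item `1` at even times, item `0` at odd
times) has long-run average utility (liminf) at least `(1/2)·(1 + 10 − 10(1−r)/(2−r)) ≥ 3`;
and `1 + 9r < 3`, so greedy does not maximize long-run average utility. -/
theorem greedy_not_optimal (r : ℝ) (hr0 : 0 < r) (hr' : r < 2 / 9)
    (v α : Fin 2 → ℝ) (hv0 : v 0 = 1) (hv1 : v 1 = 10)
    (hα0 : α 0 = 0) (hα1 : α 1 = 10) :
    (∀ x : ℕ → Fin 2,
      (∀ t : ℕ, ∀ i : Fin 2,
        v i - α i * memory r x i t ≤ v (x t) - α (x t) * memory r x (x t) t) →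
      Filter.limsup
        (fun T : ℕ =>
          (∑ t ∈ Finset.range T, (v (x t) - α (x t) * memory r x (x t) t)) / (T : ℝ))
        Filter.atTop ≤ 1 + 9 * r) ∧
    (∀ y : ℕ → Fin 2, (∀ t : ℕ, y t = if Even t then 1 else 0) →
      (1 / 2) * (1 + 10 - 10 * (1 - r) / (2 - r)) ≤
      Filter.liminf
        (fun T : ℕ =>
          (∑ t ∈ Finset.range T, (v (y t) - α (y t) * memory r y (y t) t)) / (T : ℝ))
        Filter.atTop) ∧
    ((3 : ℝ) ≤ (1 / 2) * (1 + 10 - 10 * (1 - r) / (2 - r))) ∧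
    (1 + 9 * r < 3) := by
  obtain rfl : v = ![1, 10] := by ext j; fin_cases j <;> simp [hv0, hv1]
  obtain rfl : α = ![0, 10] := by ext j; fin_cases j <;> simp [hα0, hα1]
  have hr1 : r ≤ 1 := by linarith
  refine ⟨fun x hx => IsGreedy.limsup_avg_utility_le hr0 hr1 hx,
    fun y hy => le_liminf_avg_utility_alternating hr0.le hr1 hy,
    three_le_alternating_bound hr0.le hr1, by linarith⟩
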